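/- arXiv:2005.10855 — 4 statements merged into one kernel-verified Lean document; each statement's English description precedes it below -/
import Mathlib

section
/- Let X and C be independent random variables where X is exponentially distributed with rate μ > 0 and C is Pareto distributed with scale x_m > 0 and shape α > 1 (i.e., P(C > x) = (x_m/x)^α for x ≥ x_m). Then the product B = X·C satisfies P(B > y) = α·(x_m/μ)^α · γ(α, μy/x_m) / y^α for y > 0, where γ(a, x) = ∫₀ˣ u^{a−1} e^{−u} du is the lower incomplete gamma function. -/
open MeasureTheory ProbabilityTheory Real

open Set

/-- The lower incomplete gamma function `γ(a, x) = ∫₀ˣ u^{a−1} e^{−u} du`. -/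
noncomputable def lowerIncompleteGamma (a x : ℝ) : ℝ :=
  ∫ u in Set.Ioc (0 : ℝ) x, u ^ (a - 1) * Real.exp (-u)

lemma pareto_map_eq {Ω : Type*} [MeasurableSpace Ω] (μ : Measure Ω) [IsProbabilityMeasure μ]
    (C : Ω → ℝ) (hCm : Measurable C) (xm α : ℝ) (hxm : 0 < xm) (hα : 1 < α)
    (hCtail : ∀ x : ℝ,
      μ {ω | C ω > x} = ENNReal.ofReal (if xm ≤ x then (xm / x) ^ α else 1)) :
    μ.map C = (volume.restrict (Set.Ioi xm)).withDensity
      (fun c => ENNReal.ofReal (α * xm ^ α * c ^ (-(α+1)))) := by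
  have hα0 : (0:ℝ) < α := by linarith
  haveI := Measure.isProbabilityMeasure_map hCm.aemeasurable (μ := μ) (f := C)
  refine Measure.ext_of_Iic _ _ fun x => ?_
  rw [Measure.map_apply hCm measurableSet_Iic]
  have hpre : C ⁻¹' Iic x = {ω | C ω > x}ᶜ := by ext ω; simp [not_lt]
  have hmeas : MeasurableSet {ω | C ω > x} := measurableSet_lt measurable_const hCm
  rw [hpre, prob_compl_eq_one_sub hmeas, hCtail x,
    withDensity_apply _ measurableSet_Iic, Measure.restrict_restrict measurableSet_Iic,
    Set.inter_comm, Set.Ioi_inter_Iic]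
  rcases le_or_gt x xm with h | h
  · rw [Set.Ioc_eq_empty (by exact fun hlt => absurd h (not_le.2 hlt))]
    have : (if xm ≤ x then (xm/x)^α else 1) = 1 := by
      split_ifs with h'
      · have hx : x = xm := le_antisymm h h'
        subst hx; rw [div_self (by linarith : x ≠ 0), Real.one_rpow]
      · rfl
    rw [this]
    simp
  · have hx0 : (0:ℝ) < x := hxm.trans h
    have hxα : (0:ℝ) < x ^ α := Real.rpow_pos_of_pos hx0 _
    have hxmα : (0:ℝ) < xm ^ α := Real.rpow_pos_of_pos hxm _
    rw [if_pos h.le]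
    have hbase : IntegrableOn (fun c : ℝ => c ^ (-(α+1))) (Ioi xm) :=
      integrableOn_Ioi_rpow_of_lt (by linarith) hxm
    have hInt : IntegrableOn (fun c : ℝ => α * xm ^ α * c ^ (-(α+1))) (Ioc xm x) :=
      IntegrableOn.mono_set (hbase.const_mul (α * xm ^ α)) Set.Ioc_subset_Ioi_self
    have hnn : 0 ≤ᵐ[volume.restrict (Ioc xm x)] fun c : ℝ => α * xm ^ α * c ^ (-(α+1)) := by
      refine (ae_restrict_iff' measurableSet_Ioc).2 (ae_of_all _ fun c hc => ?_)
      have hc0 : (0:ℝ) < c := hxm.trans hc.1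
      exact mul_nonneg (mul_nonneg hα0.le hxmα.le) (Real.rpow_nonneg hc0.le _)
    rw [← ofReal_integral_eq_lintegral_ofReal hInt hnn,
      ← intervalIntegral.integral_of_le h.le, intervalIntegral.integral_const_mul,
      integral_rpow (Or.inr ⟨by linarith, Set.notMem_uIcc_of_lt hxm hx0⟩)]
    have e1 : -(α+1) + 1 = -α := by ring
    rw [e1]
    have e2 : (xm / x) ^ α = xm ^ α / x ^ α := Real.div_rpow hxm.le hx0.le α
    have h1 : (xm/x)^α ≤ 1 := by
      rw [e2]; exact div_le_one_of_le₀ (Real.rpow_le_rpow hxm.le h.le hα0.le) hxα.le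
    rw [← ENNReal.ofReal_one, ← ENNReal.ofReal_sub _ (by rw [e2]; positivity)]
    congr 1
    rw [e2, Real.rpow_neg hx0.le, Real.rpow_neg hxm.le]
    field_simp
    ring

lemma pareto_exp_integral (μr xm α y : ℝ) (hμr : 0 < μr) (hxm : 0 < xm)
    (hα : 1 < α) (hy : 0 < y) :
    ∫ c in Ioi xm, α * xm ^ α * c ^ (-(α+1)) * Real.exp (-(μr * y) / c)
      = α * (xm / μr) ^ α * lowerIncompleteGamma α (μr * y / xm) / y ^ α := by
  set a : ℝ := μr * y with ha_def
  have ha : 0 < a := mul_pos hμr hy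
  set b : ℝ := a / xm with hb_def
  have hb : 0 < b := div_pos ha hxm
  have himg : (fun u : ℝ => a / u) '' Ioo 0 b = Ioi xm := by
    ext c
    constructor
    · rintro ⟨u, ⟨hu0, hub⟩, rfl⟩
      have : xm < a / u := by
        rw [lt_div_iff₀ hu0]
        calc xm * u < xm * b := by nlinarith
          _ = a := by rw [hb_def]; field_simp
      exact this
    · intro hc
      have hc0 : (0:ℝ) < c := hxm.trans hc
      refine ⟨a / c, ⟨div_pos ha hc0, ?_⟩, by field_simp⟩
      rw [hb_def, div_lt_div_iff₀ hc0 hxm]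
      exact mul_lt_mul_of_pos_left hc ha
  have hderiv : ∀ u ∈ Ioo (0:ℝ) b, HasDerivWithinAt (fun u : ℝ => a / u)
      (-a / u ^ 2) (Ioo 0 b) u := by
    intro u hu
    have h := (hasDerivAt_inv hu.1.ne').const_mul a
    have : HasDerivAt (fun u : ℝ => a / u) (-a / u ^ 2) u := by
      simpa only [div_eq_mul_inv, mul_neg, neg_div, neg_mul] using h
    exact this.hasDerivWithinAt
  have hinj : InjOn (fun u : ℝ => a / u) (Ioo 0 b) := by
    intro u hu v hv h
    simp only at h
    rw [div_eq_div_iff hu.1.ne' hv.1.ne'] at h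
    exact (mul_left_cancel₀ ha.ne' h).symm
  rw [← himg, integral_image_eq_integral_abs_deriv_smul measurableSet_Ioo hderiv hinj]
  have hcong : ∀ u ∈ Ioo (0:ℝ) b,
      |(-a / u ^ 2)| • (α * xm ^ α * (a / u) ^ (-(α+1)) * Real.exp (-a / (a / u)))
        = (α * xm ^ α * a ^ (-α)) * (u ^ (α-1) * Real.exp (-u)) := by
    intro u hu
    have hu0 : (0:ℝ) < u := hu.1
    have e0 : -a / (a / u) = -u := by field_simp
    have e1 : (a / u) ^ (-(α+1)) = a ^ (-(α+1)) * u ^ (α+1) := by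
      rw [Real.div_rpow ha.le hu0.le, div_eq_mul_inv, ← Real.rpow_neg hu0.le, neg_neg]
    have e2 : a * a ^ (-(α+1)) = a ^ (-α) := by
      nth_rewrite 1 [← Real.rpow_one a]
      rw [← Real.rpow_add ha]
      norm_num
    have e3 : u ^ (α+1) / u ^ (2:ℕ) = u ^ (α-1) := by
      rw [← Real.rpow_natCast u 2, ← Real.rpow_sub hu0]
      norm_num
      ring_nf
    have habs : |(-a / u ^ 2)| = a / u ^ 2 := by
      rw [abs_div, abs_neg, abs_of_pos ha, abs_of_pos (by positivity : (0:ℝ) < u ^ 2)]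
    rw [smul_eq_mul, habs, e0, e1]
    calc a / u ^ 2 * (α * xm ^ α * (a ^ (-(α+1)) * u ^ (α+1)) * Real.exp (-u))
        = (α * xm ^ α) * ((a * a ^ (-(α+1))) * (u ^ (α+1) / u ^ (2:ℕ)) * Real.exp (-u)) := by
          ring
      _ = α * xm ^ α * a ^ (-α) * (u ^ (α-1) * Real.exp (-u)) := by rw [e2, e3]; ring
  rw [setIntegral_congr_fun measurableSet_Ioo hcong, integral_const_mul]
  have hγ : lowerIncompleteGamma α (μr * y / xm) = ∫ u in Ioo (0:ℝ) b, u ^ (α-1) * Real.exp (-u) := by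
    rw [lowerIncompleteGamma, integral_Ioc_eq_integral_Ioo]
  rw [hγ]
  have hfin : α * xm ^ α * a ^ (-α) = α * (xm / μr) ^ α / y ^ α := by
    rw [Real.div_rpow hxm.le hμr.le, Real.rpow_neg ha.le, ha_def,
      Real.mul_rpow hμr.le hy.le]
    have h1 : (0:ℝ) < μr ^ α := Real.rpow_pos_of_pos hμr _
    have h2 : (0:ℝ) < y ^ α := Real.rpow_pos_of_pos hy _
    field_simp
  rw [hfin]
  ring

/-- If `X` is exponential with rate `μr > 0`, `C` is Pareto with scale `xm > 0` and
shape `α > 1`, and `X` and `C` are independent, then the product `B = X·C` has tail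
`P(B > y) = α (xm/μr)^α γ(α, μr y / xm) / y^α` for `y > 0`. -/
theorem pareto_exponential_product_tail
    {Ω : Type*} [MeasurableSpace Ω] (μ : Measure Ω) [IsProbabilityMeasure μ]
    (X C : Ω → ℝ) (hXm : Measurable X) (hCm : Measurable C)
    (μr xm α : ℝ) (hμr : 0 < μr) (hxm : 0 < xm) (hα : 1 < α)
    (hindep : IndepFun X C μ)
    (hXtail : ∀ t : ℝ, 0 ≤ t → μ {ω | X ω > t} = ENNReal.ofReal (Real.exp (-μr * t)))
    (hCtail : ∀ x : ℝ,
      μ {ω | C ω > x} = ENNReal.ofReal (if xm ≤ x then (xm / x) ^ α else 1))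
    (y : ℝ) (hy : 0 < y) :
    μ {ω | X ω * C ω > y} =
      ENNReal.ofReal
        (α * (xm / μr) ^ α * lowerIncompleteGamma α (μr * y / xm) / y ^ α) := by
  have hα0 : (0:ℝ) < α := by linarith
  haveI hXP : IsProbabilityMeasure (μ.map X) := Measure.isProbabilityMeasure_map hXm.aemeasurable
  haveI hCP : IsProbabilityMeasure (μ.map C) := Measure.isProbabilityMeasure_map hCm.aemeasurable
  have hs : MeasurableSet {p : ℝ × ℝ | p.1 * p.2 > y} :=
    measurableSet_lt measurable_const (measurable_fst.mul measurable_snd)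
  have h1 : μ {ω | X ω * C ω > y} = (μ.map X).prod (μ.map C) {p : ℝ × ℝ | p.1 * p.2 > y} := by
    rw [← (indepFun_iff_map_prod_eq_prod_map_map hXm.aemeasurable hCm.aemeasurable).mp hindep,
      Measure.map_apply (hXm.prodMk hCm) hs]
    rfl
  rw [h1, Measure.prod_apply_symm hs]
  have hmap := pareto_map_eq μ C hCm xm α hxm hα hCtail
  have hae : ∀ᵐ c ∂(μ.map C), c ∈ Set.Ioi xm := by
    rw [ae_iff]
    have hset : {c : ℝ | c ∉ Set.Ioi xm} = Set.Iic xm := by ext c; simp [not_lt]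
    rw [hset, hmap, withDensity_apply _ measurableSet_Iic,
      Measure.restrict_restrict measurableSet_Iic, Set.inter_comm, Set.Ioi_inter_Iic,
      Set.Ioc_self]
    simp
  have hcongr : ∀ᵐ c ∂(μ.map C),
      (μ.map X) ((fun x => (x, c)) ⁻¹' {p : ℝ × ℝ | p.1 * p.2 > y})
        = ENNReal.ofReal (Real.exp (-(μr * y) / c)) := by
    filter_upwards [hae] with c hc
    have hc0 : (0:ℝ) < c := hxm.trans hc
    have hset : ((fun x : ℝ => (x, c)) ⁻¹' {p : ℝ × ℝ | p.1 * p.2 > y}) = Set.Ioi (y / c) := by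
      ext x
      simp [Set.mem_Ioi, gt_iff_lt, div_lt_iff₀ hc0]
    rw [hset, Measure.map_apply hXm measurableSet_Ioi]
    have hpre : X ⁻¹' Set.Ioi (y/c) = {ω | X ω > y/c} := rfl
    rw [hpre, hXtail (y/c) (le_of_lt (div_pos hy hc0))]
    congr 1
    rw [neg_mul, neg_div, mul_div_assoc]
  have hdmeas : Measurable fun c : ℝ => ENNReal.ofReal (α * xm ^ α * c ^ (-(α+1))) := by
    fun_prop
  have hGmeas : Measurable fun c : ℝ => ENNReal.ofReal (Real.exp (-(μr * y) / c)) := by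
    fun_prop
  rw [lintegral_congr_ae hcongr, hmap,
    lintegral_withDensity_eq_lintegral_mul _ hdmeas hGmeas]
  simp only [Pi.mul_apply]
  have hmul : ∀ c ∈ Set.Ioi xm,
      ENNReal.ofReal (α * xm ^ α * c ^ (-(α+1))) * ENNReal.ofReal (Real.exp (-(μr * y) / c))
        = ENNReal.ofReal (α * xm ^ α * c ^ (-(α+1)) * Real.exp (-(μr * y) / c)) := by
    intro c hc
    have hc0 : (0:ℝ) < c := hxm.trans hc
    exact (ENNReal.ofReal_mul (mul_nonneg (mul_nonneg hα0.le (Real.rpow_nonneg hxm.le α))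
      (Real.rpow_nonneg hc0.le _))).symm
  rw [setLIntegral_congr_fun measurableSet_Ioi hmul]
  have hbase : IntegrableOn (fun c : ℝ => c ^ (-(α+1))) (Set.Ioi xm) :=
    integrableOn_Ioi_rpow_of_lt (by linarith) hxm
  have hInt : IntegrableOn
      (fun c : ℝ => α * xm ^ α * c ^ (-(α+1)) * Real.exp (-(μr * y) / c)) (Set.Ioi xm) := by
    refine Integrable.mono (hbase.const_mul (α * xm ^ α))
      ((by fun_prop : Measurable fun c : ℝ =>
        α * xm ^ α * c ^ (-(α+1)) * Real.exp (-(μr * y) / c)).aestronglyMeasurable) ?_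
    refine (ae_restrict_iff' measurableSet_Ioi).2 (ae_of_all _ fun c hc => ?_)
    have hc0 : (0:ℝ) < c := hxm.trans hc
    have hfnn : (0:ℝ) ≤ α * xm ^ α * c ^ (-(α+1)) :=
      mul_nonneg (mul_nonneg hα0.le (Real.rpow_nonneg hxm.le α)) (Real.rpow_nonneg hc0.le _)
    rw [Real.norm_eq_abs, Real.norm_eq_abs, abs_of_nonneg (mul_nonneg hfnn (Real.exp_nonneg _)),
      abs_of_nonneg hfnn]
    refine mul_le_of_le_one_right hfnn (Real.exp_le_one_iff.2 ?_)
    rw [neg_div]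
    exact neg_nonpos.2 (div_nonneg (by positivity) hc0.le)
  have hnn : 0 ≤ᵐ[volume.restrict (Set.Ioi xm)]
      fun c : ℝ => α * xm ^ α * c ^ (-(α+1)) * Real.exp (-(μr * y) / c) := by
    refine (ae_restrict_iff' measurableSet_Ioi).2 (ae_of_all _ fun c hc => ?_)
    have hc0 : (0:ℝ) < c := hxm.trans hc
    exact mul_nonneg (mul_nonneg (mul_nonneg hα0.le (Real.rpow_nonneg hxm.le α))
      (Real.rpow_nonneg hc0.le _)) (Real.exp_nonneg _)
  rw [← ofReal_integral_eq_lintegral_ofReal hInt hnn,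
    pareto_exp_integral μr xm α y hμr hxm hα hy]
end

section
/- Let X₁, …, Xₙ be n i.i.d. random variables each with mean 1/μ and variance σ². Let S = X_{(k)} be the k-th order statistic (1 ≤ k ≤ n). Then E[S] ≤ 1/μ + σ·√((k−1)/(n−k+1)). -/
open MeasureTheory ProbabilityTheory Real

/-- The `r`-th order statistic (1-indexed) of a finite family of random variables. -/
noncomputable def orderStat {Ω : Type*} {n : ℕ} (X : Fin n → Ω → ℝ) (r : ℕ) (ω : Ω) : ℝ :=
  (List.insertionSort (· ≤ ·) (List.ofFn fun i => X i ω)).getD (r - 1) 0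

namespace ArnoldGroeneveldAux

lemma countP_ofFn_eq (n : ℕ) (v : Fin n → ℝ) (t : ℝ) :
    (List.ofFn v).countP (fun x => decide (x ≤ t))
      = (Finset.univ.filter (fun i => v i ≤ t)).card := by
  classical
  rw [List.ofFn_eq_map, List.countP_map, Fin.univ_def]
  simp [Finset.filter, Finset.card, Multiset.filter_coe, List.countP_eq_length_filter,
    Function.comp]
  rfl

lemma sorted_getD_le_iff {n k : ℕ} (l : List ℝ) (hs : l.Pairwise (· ≤ ·)) (hlen : l.length = n)
    (hk1 : 1 ≤ k) (hkn : k ≤ n) (t : ℝ) :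
    l.getD (k - 1) 0 ≤ t ↔ k ≤ l.countP (fun x => decide (x ≤ t)) := by
  have hklt : k - 1 < l.length := by omega
  have hgetD : l.getD (k - 1) 0 = l[k - 1] := List.getD_eq_getElem l 0 hklt
  rw [hgetD]
  constructor
  · intro h
    have hsplit : l.countP (fun x => decide (x ≤ t))
        = (l.take k).countP (fun x => decide (x ≤ t))
          + (l.drop k).countP (fun x => decide (x ≤ t)) := by
      conv_lhs => rw [← List.take_append_drop k l]
      rw [List.countP_append]
    have htake : (l.take k).countP (fun x => decide (x ≤ t)) = k := by
      have hlen' : (l.take k).length = k := by rw [List.length_take]; omega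
      have : (l.take k).countP (fun x => decide (x ≤ t)) = (l.take k).length := by
        rw [List.countP_eq_length]
        intro x hx
        obtain ⟨j, hj, rfl⟩ := List.mem_iff_getElem.1 hx
        have hj' : j < k := by rw [hlen'] at hj; exact hj
        have hjl : j < l.length := by omega
        rw [List.getElem_take]
        have : l[j] ≤ l[k - 1] := by
          have := hs.rel_get_of_le (a := ⟨j, hjl⟩) (b := ⟨k - 1, hklt⟩)
            (by simp [Fin.le_def]; omega)
          simpa using this
        simp only [decide_eq_true_eq]
        linarith
      omega
    omega
  · intro h
    by_contra hlt
    push_neg at hlt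
    have hsplit : l.countP (fun x => decide (x ≤ t))
        = (l.take (k - 1)).countP (fun x => decide (x ≤ t))
          + (l.drop (k - 1)).countP (fun x => decide (x ≤ t)) := by
      conv_lhs => rw [← List.take_append_drop (k - 1) l]
      rw [List.countP_append]
    have hdrop : (l.drop (k - 1)).countP (fun x => decide (x ≤ t)) = 0 := by
      rw [List.countP_eq_zero]
      intro x hx
      obtain ⟨j, hj, rfl⟩ := List.mem_iff_getElem.1 hx
      rw [List.getElem_drop]
      have hjl : k - 1 + j < l.length := by
        rw [List.length_drop] at hj; omega
      have : l[k - 1] ≤ l[k - 1 + j] := by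
        have := hs.rel_get_of_le (a := ⟨k - 1, hklt⟩) (b := ⟨k - 1 + j, hjl⟩)
          (by simp [Fin.le_def])
        simpa using this
      simp only [decide_eq_true_eq]
      intro hxt
      exact absurd (le_trans this hxt) (not_le.2 hlt)
    have htake : (l.take (k - 1)).countP (fun x => decide (x ≤ t)) ≤ k - 1 := by
      calc (l.take (k - 1)).countP (fun x => decide (x ≤ t)) ≤ (l.take (k - 1)).length :=
        List.countP_le_length
      _ ≤ k - 1 := by rw [List.length_take]; omega
    omega

lemma measurable_orderStat {Ω : Type*} [MeasurableSpace Ω] {n : ℕ} (X : Fin n → Ω → ℝ)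
    (hXm : ∀ i, Measurable (X i)) (k : ℕ) (hk1 : 1 ≤ k) (hkn : k ≤ n) :
    Measurable (orderStat X k) := by
  classical
  apply measurable_of_Iic
  intro t
  have hset : orderStat X k ⁻¹' Set.Iic t =
      ⋃ (A : Finset (Fin n)) (_ : A.card = k), ⋂ i ∈ A, X i ⁻¹' Set.Iic t := by
    ext ω
    simp only [Set.mem_preimage, Set.mem_Iic, Set.mem_iUnion, Set.mem_iInter]
    set l := List.insertionSort (· ≤ ·) (List.ofFn fun i => X i ω) with hl
    have hperm : List.Perm l (List.ofFn fun i => X i ω) := List.perm_insertionSort _ _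
    have hsorted : l.Pairwise (· ≤ ·) := List.pairwise_insertionSort _ _
    have hlen : l.length = n := by rw [hperm.length_eq, List.length_ofFn]
    rw [orderStat, ← hl, sorted_getD_le_iff l hsorted hlen hk1 hkn t,
      hperm.countP_eq, countP_ofFn_eq]
    constructor
    · intro h
      obtain ⟨A, hA, hcard⟩ := Finset.exists_subset_card_eq h
      exact ⟨A, hcard, fun i hi => (Finset.mem_filter.1 (hA hi)).2⟩
    · rintro ⟨A, hcard, hA⟩
      calc k = A.card := hcard.symm
        _ ≤ (Finset.univ.filter (fun i => X i ω ≤ t)).card :=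
          Finset.card_le_card (fun i hi => Finset.mem_filter.2 ⟨Finset.mem_univ i, hA i hi⟩)
  rw [hset]
  exact MeasurableSet.iUnion fun A => MeasurableSet.iUnion fun _ =>
    MeasurableSet.biInter (Set.to_countable _) fun i _ => hXm i measurableSet_Iic

lemma orderStat_mem {Ω : Type*} {n : ℕ} (X : Fin n → Ω → ℝ) (k : ℕ)
    (hk1 : 1 ≤ k) (hkn : k ≤ n) (ω : Ω) : ∃ i, orderStat X k ω = X i ω := by
  set l := List.insertionSort (· ≤ ·) (List.ofFn fun i => X i ω) with hl
  have hperm : List.Perm l (List.ofFn fun i => X i ω) := List.perm_insertionSort _ _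
  have hlen : l.length = n := by rw [hperm.length_eq, List.length_ofFn]
  have hklt : k - 1 < l.length := by omega
  have : orderStat X k ω = l[k - 1] := List.getD_eq_getElem l 0 hklt
  rw [this]
  have hmem : l[k - 1] ∈ List.ofFn fun i => X i ω := hperm.mem_iff.1 (List.getElem_mem _)
  obtain ⟨i, hi⟩ := List.mem_ofFn.1 hmem
  exact ⟨i, hi.symm⟩

lemma integrable_orderStat {Ω : Type*} [MeasurableSpace Ω] {μ : Measure Ω}
    [IsProbabilityMeasure μ] {n : ℕ} (X : Fin n → Ω → ℝ)
    (hXm : ∀ i, Measurable (X i)) (hL2 : ∀ i, MemLp (X i) 2 μ)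
    (k : ℕ) (hk1 : 1 ≤ k) (hkn : k ≤ n) :
    Integrable (orderStat X k) μ := by
  have hbound : Integrable (fun ω => ∑ i, |X i ω|) μ :=
    integrable_finset_sum _ fun i _ => ((hL2 i).integrable one_le_two).abs
  apply Integrable.mono' hbound
    ((measurable_orderStat X hXm k hk1 hkn).aestronglyMeasurable)
  filter_upwards with ω
  obtain ⟨i, hi⟩ := orderStat_mem X k hk1 hkn ω
  rw [Real.norm_eq_abs, hi]
  exact Finset.single_le_sum (f := fun j => |X j ω|) (fun j _ => abs_nonneg _) (Finset.mem_univ i)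

lemma key_pt {n : ℕ} (v : Fin n → ℝ) (c : ℝ) (k : ℕ) (hk1 : 1 ≤ k) (hkn : k ≤ n) :
    ((n : ℝ) - k + 1) * max ((List.insertionSort (· ≤ ·) (List.ofFn v)).getD (k - 1) 0 - c) 0
      ≤ ∑ i, max (v i - c) 0 := by
  classical
  set g : ℝ → ℝ := fun x => max (x - c) 0 with hg
  have hgmono : Monotone g := fun x y h => max_le_max (by linarith) le_rfl
  have hgnn : ∀ x, 0 ≤ g x := fun x => le_max_right _ _
  set l := List.insertionSort (· ≤ ·) (List.ofFn v) with hl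
  have hperm : List.Perm l (List.ofFn v) := List.perm_insertionSort _ _
  have hsorted : l.Pairwise (· ≤ ·) := List.pairwise_insertionSort _ _
  have hlen : l.length = n := by rw [hperm.length_eq, List.length_ofFn]
  have hklt : k - 1 < l.length := by omega
  set S : ℝ := l.getD (k - 1) 0 with hS
  have hSget : S = l[k - 1] := List.getD_eq_getElem l 0 hklt
  have hsum : ∑ i, g (v i) = (l.map g).sum := by
    have h1 : (List.map g l).sum = (List.map g (List.ofFn v)).sum :=
      List.Perm.sum_eq (hperm.map g)
    have h2 : List.map g (List.ofFn v) = List.ofFn (fun i => g (v i)) := List.map_ofFn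
    rw [h1, h2, List.sum_ofFn]
  have hsplit : (l.map g).sum = ((l.take (k-1)).map g).sum + ((l.drop (k-1)).map g).sum := by
    rw [← List.sum_append, ← List.map_append, List.take_append_drop]
  have h1 : 0 ≤ ((l.take (k-1)).map g).sum :=
    List.sum_nonneg (by intro x hx; obtain ⟨y, _, rfl⟩ := List.mem_map.1 hx; exact hgnn y)
  have hdrop : ∀ x ∈ l.drop (k-1), g S ≤ g x := by
    intro x hx
    obtain ⟨j, hj, rfl⟩ := List.mem_iff_getElem.1 hx
    rw [List.getElem_drop]
    apply hgmono
    rw [hSget]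
    have hjl : k - 1 + j < l.length := by rw [List.length_drop] at hj; omega
    have := hsorted.rel_get_of_le (a := ⟨k - 1, hklt⟩) (b := ⟨k - 1 + j, hjl⟩)
      (by simp [Fin.le_def])
    simpa using this
  have h2 : ((l.drop (k-1)).length : ℝ) * g S ≤ ((l.drop (k-1)).map g).sum := by
    have := List.card_nsmul_le_sum (l := (l.drop (k-1)).map g) (n := g S) ?_
    · simpa [nsmul_eq_mul] using this
    · intro x hx; obtain ⟨y, hy, rfl⟩ := List.mem_map.1 hx; exact hdrop y hy
  have hcast : ((l.drop (k-1)).length : ℝ) = (n : ℝ) - k + 1 := by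
    rw [List.length_drop, hlen, Nat.cast_sub (by omega : k - 1 ≤ n),
      Nat.cast_sub hk1]
    push_cast
    ring
  calc ((n : ℝ) - k + 1) * max (S - c) 0 = ((l.drop (k-1)).length : ℝ) * g S := by rw [hcast]
    _ ≤ ((l.drop (k-1)).map g).sum := h2
    _ ≤ (l.map g).sum := by rw [hsplit]; linarith
    _ = ∑ i, g (v i) := hsum.symm

lemma l2bound {Ω : Type*} [MeasurableSpace Ω] {μ : Measure Ω} [IsProbabilityMeasure μ]
    (Y : Ω → ℝ) (hY : MemLp Y 2 μ) :
    ∫ ω, |Y ω| ∂μ ≤ Real.sqrt (∫ ω, Y ω ^ 2 ∂μ) := by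
  have h1 : variance (fun ω => |Y ω|) μ = (∫ ω, |Y ω| ^ 2 ∂μ) - (∫ ω, |Y ω| ∂μ) ^ 2 :=
    variance_eq_sub hY.abs
  have h2 : 0 ≤ variance (fun ω => |Y ω|) μ := variance_nonneg _ _
  have h3 : (∫ ω, |Y ω| ^ 2 ∂μ) = ∫ ω, Y ω ^ 2 ∂μ := by simp [sq_abs]
  rw [Real.le_sqrt (integral_nonneg fun ω => abs_nonneg _)]
  · nlinarith
  · exact integral_nonneg fun ω => sq_nonneg _

lemma secmom {Ω : Type*} [MeasurableSpace Ω] {μ : Measure Ω} [IsProbabilityMeasure μ]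
    (Y : Ω → ℝ) (hY : MemLp Y 2 μ) (c : ℝ) :
    ∫ ω, (Y ω - c) ^ 2 ∂μ = variance Y μ + ((∫ ω, Y ω ∂μ) - c) ^ 2 := by
  have h1 : variance Y μ = (∫ ω, Y ω ^ 2 ∂μ) - (∫ ω, Y ω ∂μ) ^ 2 := variance_eq_sub hY
  have hint : Integrable Y μ := hY.integrable one_le_two
  have hsq : Integrable (fun ω => Y ω ^ 2) μ := hY.integrable_sq
  have hsub : Integrable (fun ω => Y ω ^ 2 - (2*c) * Y ω) μ := hsq.sub (hint.const_mul (2*c))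
  have h4 : ∫ ω, (Y ω - c) ^ 2 ∂μ = ∫ ω, (Y ω ^ 2 - (2*c) * Y ω + c^2) ∂μ := by
    congr 1; ext ω; ring
  have h5 : ∫ ω, (Y ω ^ 2 - (2*c) * Y ω + c^2) ∂μ
      = (∫ ω, Y ω ^ 2 ∂μ) - (2*c) * (∫ ω, Y ω ∂μ) + c^2 := by
    rw [integral_add hsub (integrable_const _), integral_sub hsq (hint.const_mul (2*c)),
      integral_const_mul, integral_const]
    simp [measure_univ]
  rw [h4, h5]; nlinarith [h1]

lemma posPart_int_bound {Ω : Type*} [MeasurableSpace Ω] {μ : Measure Ω}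
    [IsProbabilityMeasure μ] (Y : Ω → ℝ) (hY : MemLp Y 2 μ) (m σ c : ℝ)
    (hmean : ∫ ω, Y ω ∂μ = 1 / m) (hvar : variance Y μ = σ ^ 2) :
    ∫ ω, max (Y ω - c) 0 ∂μ ≤ ((1/m - c) + Real.sqrt (σ^2 + (1/m - c)^2)) / 2 := by
  have hint : Integrable Y μ := hY.integrable one_le_two
  have hZint : Integrable (fun ω => Y ω - c) μ := hint.sub (integrable_const c)
  have habs : Integrable (fun ω => |Y ω - c|) μ := hZint.abs
  have hZ2 : MemLp (fun ω => Y ω - c) 2 μ := by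
    have := hY.sub (memLp_const (p := 2) (μ := μ) c)
    exact this
  have hmax : ∀ ω, max (Y ω - c) 0 = ((Y ω - c) + |Y ω - c|) / 2 := by
    intro ω
    rcases le_total (Y ω - c) 0 with h | h
    · rw [max_eq_right h, abs_of_nonpos h]; ring
    · rw [max_eq_left h, abs_of_nonneg h]; ring
  have h0 : ∫ ω, max (Y ω - c) 0 ∂μ = ((∫ ω, (Y ω - c) ∂μ) + ∫ ω, |Y ω - c| ∂μ) / 2 := by
    simp_rw [hmax]
    rw [integral_div, integral_add hZint habs]
  have h1 : ∫ ω, (Y ω - c) ∂μ = 1/m - c := by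
    rw [integral_sub hint (integrable_const c), hmean, integral_const]
    simp [measure_univ]
  have h2 : ∫ ω, |Y ω - c| ∂μ ≤ Real.sqrt (σ^2 + (1/m - c)^2) := by
    have hb := l2bound (fun ω => Y ω - c) hZ2
    have hm2 : ∫ ω, (Y ω - c) ^ 2 ∂μ = σ^2 + (1/m - c)^2 := by
      rw [secmom Y hY c, hvar, hmean]
    rw [hm2] at hb
    exact hb
  rw [h0, h1]
  linarith

lemma algebra_identity : ∀ m' σ' K' a' s' : ℝ, s' ≠ 0 → a' ≠ 0 → m' ≠ 0 →
    (1/m' + σ' * (K' - a') / (2 * s')) + (1/a') * ((K' + a') *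
      ((- (σ' * (K' - a') / (2 * s')) + σ' * (K' + a') / (2 * s')) / 2))
      = 1/m' + σ' * (K' / s') := by
  intro m' σ' K' a' s' h1 h2 h3
  field_simp
  ring

end ArnoldGroeneveldAux

open ArnoldGroeneveldAux in
/-- Arnold–Groeneveld bound: for `X₁, …, Xₙ` i.i.d. with mean `1/m` and variance `σ²`,
the `k`-th order statistic `S = X_{(k)}` satisfies
`E[S] ≤ 1/m + σ √((k−1)/(n−k+1))`. -/
theorem arnold_groeneveld_orderStat_bound
    {Ω : Type*} [MeasurableSpace Ω] (μ : Measure Ω) [IsProbabilityMeasure μ]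
    (n : ℕ) (X : Fin n → Ω → ℝ) (hXm : ∀ i, Measurable (X i))
    (hindep : iIndepFun X μ)
    (hident : ∀ i j, IdentDistrib (X i) (X j) μ μ)
    (hL2 : ∀ i, MemLp (X i) 2 μ)
    (m σ : ℝ) (hm : 0 < m) (hσ : 0 ≤ σ)
    (hmean : ∀ i, ∫ ω, X i ω ∂μ = 1 / m)
    (hvar : ∀ i, variance (X i) μ = σ ^ 2)
    (k : ℕ) (hk1 : 1 ≤ k) (hkn : k ≤ n) :
    ∫ ω, orderStat X k ω ∂μ ≤
      1 / m + σ * Real.sqrt (((k : ℝ) - 1) / ((n : ℝ) - k + 1)) := by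
  have hSint : Integrable (orderStat X k) μ := integrable_orderStat X hXm hL2 k hk1 hkn
  rcases eq_or_lt_of_le hk1 with hk1' | hk2
  · -- k = 1
    have hn1 : 0 < n := by omega
    set i₀ : Fin n := ⟨0, hn1⟩
    have hpt : ∀ ω, orderStat X k ω ≤ X i₀ ω := by
      intro ω
      set l := List.insertionSort (· ≤ ·) (List.ofFn fun i => X i ω) with hl
      have hperm : List.Perm l (List.ofFn fun i => X i ω) := List.perm_insertionSort _ _
      have hsorted : l.Pairwise (· ≤ ·) := List.pairwise_insertionSort _ _
      have hlen : l.length = n := by rw [hperm.length_eq, List.length_ofFn]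
      have hklt : k - 1 < l.length := by omega
      have hget : orderStat X k ω = l[k - 1] := List.getD_eq_getElem l 0 hklt
      have hmem : X i₀ ω ∈ l := hperm.mem_iff.2 (by
        rw [List.mem_ofFn]; exact ⟨i₀, rfl⟩)
      obtain ⟨j, hj, hjx⟩ := List.mem_iff_getElem.1 hmem
      rw [hget, ← hjx]
      have := hsorted.rel_get_of_le (a := ⟨k - 1, hklt⟩) (b := ⟨j, hj⟩)
        (by simp [Fin.le_def]; omega)
      simpa using this
    have h1 : ∫ ω, orderStat X k ω ∂μ ≤ ∫ ω, X i₀ ω ∂μ :=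
      integral_mono hSint ((hL2 i₀).integrable one_le_two) hpt
    rw [hmean i₀] at h1
    have : 0 ≤ σ * Real.sqrt (((k : ℝ) - 1) / ((n : ℝ) - k + 1)) :=
      mul_nonneg hσ (Real.sqrt_nonneg _)
    linarith
  · -- 2 ≤ k
    have hk2' : 2 ≤ k := hk2
    set K : ℝ := (k : ℝ) - 1 with hK
    set a : ℝ := (n : ℝ) - (k : ℝ) + 1 with ha
    have hkR : (2:ℝ) ≤ (k:ℝ) := by exact_mod_cast hk2'
    have hnR : (k:ℝ) ≤ (n:ℝ) := by exact_mod_cast hkn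
    have hK1 : 1 ≤ K := by rw [hK]; linarith
    have ha1 : 1 ≤ a := by rw [ha]; linarith
    have hK0 : 0 < K := by linarith
    have ha0 : 0 < a := by linarith
    set s : ℝ := Real.sqrt (K * a) with hs
    have hs2 : s ^ 2 = K * a := Real.sq_sqrt (by positivity)
    have hs0 : 0 < s := Real.sqrt_pos.2 (by positivity)
    set t : ℝ := σ * (K - a) / (2 * s) with ht
    set c : ℝ := 1 / m + t with hc
    -- the square root computation
    have hsqrt : Real.sqrt (σ^2 + (1/m - c)^2) = σ * (K + a) / (2 * s) := by
      have h1 : (1/m - c)^2 = t^2 := by rw [hc]; ring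
      have h2 : σ^2 + t^2 = (σ * (K + a) / (2 * s))^2 := by
        rw [ht]
        field_simp
        nlinarith [hs2]
      rw [h1, h2, Real.sqrt_sq (by positivity)]
    have hsqrtKa : Real.sqrt (K / a) = K / s := by
      have h1 : K / a = (K / s)^2 := by
        field_simp
        nlinarith [hs2]
      rw [h1, Real.sqrt_sq (by positivity)]
    -- pointwise bound
    have hpt : ∀ ω, orderStat X k ω ≤ c + (1/a) * ∑ i, max (X i ω - c) 0 := by
      intro ω
      have hkey := key_pt (fun i => X i ω) c k hk1 hkn
      have hle : orderStat X k ω - c ≤ max (orderStat X k ω - c) 0 := le_max_left _ _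
      have h2 : a * (orderStat X k ω - c) ≤ ∑ i, max (X i ω - c) 0 := by
        calc a * (orderStat X k ω - c) ≤ a * max (orderStat X k ω - c) 0 := by
              exact mul_le_mul_of_nonneg_left hle (le_of_lt ha0)
          _ ≤ ∑ i, max (X i ω - c) 0 := by rw [ha]; exact hkey
      have h3 : orderStat X k ω - c ≤ (∑ i, max (X i ω - c) 0) / a :=
        (le_div_iff₀ ha0).2 (by linarith [h2])
      have h4 : (∑ i, max (X i ω - c) 0) / a = (1/a) * ∑ i, max (X i ω - c) 0 := by ring
      linarith [h3, h4]
    -- integrability of the RHS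
    have hgint : ∀ i : Fin n, Integrable (fun ω => max (X i ω - c) 0) μ :=
      fun i => (((hL2 i).integrable one_le_two).sub (integrable_const c)).pos_part
    have hsumint : Integrable (fun ω => ∑ i, max (X i ω - c) 0) μ :=
      integrable_finset_sum _ fun i _ => hgint i
    have hRHSint : Integrable (fun ω => c + (1/a) * ∑ i, max (X i ω - c) 0) μ :=
      (integrable_const c).add (hsumint.const_mul (1/a))
    have hstep1 : ∫ ω, orderStat X k ω ∂μ ≤ c + (1/a) * ∑ i, ∫ ω, max (X i ω - c) 0 ∂μ := by
      have h1 := integral_mono hSint hRHSint hpt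
      rw [integral_add (integrable_const c) (hsumint.const_mul (1/a)), integral_const,
        integral_const_mul, integral_finset_sum _ (fun i _ => hgint i)] at h1
      simpa [measure_univ] using h1
    set B : ℝ := ((1/m - c) + Real.sqrt (σ^2 + (1/m - c)^2)) / 2 with hB
    have hgB : ∀ i : Fin n, ∫ ω, max (X i ω - c) 0 ∂μ ≤ B :=
      fun i => posPart_int_bound (X i) (hL2 i) m σ c (hmean i) (hvar i)
    have hsumB : ∑ i, ∫ ω, max (X i ω - c) 0 ∂μ ≤ (n:ℝ) * B := by
      calc ∑ i, ∫ ω, max (X i ω - c) 0 ∂μ ≤ ∑ _i : Fin n, B :=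
            Finset.sum_le_sum fun i _ => hgB i
        _ = (n:ℝ) * B := by simp [Finset.sum_const, nsmul_eq_mul]
    have hstep2 : ∫ ω, orderStat X k ω ∂μ ≤ c + (1/a) * ((n:ℝ) * B) := by
      have h1a : (0:ℝ) ≤ 1/a := by positivity
      have := mul_le_mul_of_nonneg_left hsumB h1a
      linarith [hstep1]
    have hm0 : m ≠ 0 := ne_of_gt hm
    have hs0' : s ≠ 0 := ne_of_gt hs0
    have ha0' : a ≠ 0 := ne_of_gt ha0
    clear_value B c t s a K
    have hBval : B = (- t + σ * (K + a) / (2 * s)) / 2 := by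
      rw [hB, hsqrt, hc]; ring
    have hnKa : (n:ℝ) = K + a := by rw [hK, ha]; ring
    have hfinal : c + (1/a) * ((n:ℝ) * B) = 1/m + σ * (K / s) := by
      rw [hBval, hnKa, hc, ht]
      exact algebra_identity m σ K a s hs0' ha0' hm0
    calc ∫ ω, orderStat X k ω ∂μ ≤ c + (1/a) * ((n:ℝ) * B) := hstep2
      _ = 1/m + σ * (K / s) := hfinal
      _ = 1/m + σ * Real.sqrt (K / a) := by rw [hsqrtKa]
end

section
/- Let S ⊆ {1,…,m} be a finite set with |S| = n, let k ≤ n be a positive integer, and let (πⱼ)_{j∈S} satisfy πⱼ ∈ [0,1] for all j and Σ_{j∈S} πⱼ = k. Then there exists a probability distribution P on the k-element subsets A of S such that for every j ∈ S, Σ_{A: j∈A} P(A) = πⱼ. -/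
open Finset

private lemma base_case (m k : ℕ) (S : Finset (Fin m)) (π : Fin m → ℝ)
    (h01 : ∀ j ∈ S, π j = 0 ∨ π j = 1)
    (hsum : ∑ j ∈ S, π j = k) :
    ∃ P : Finset (Fin m) → ℝ,
      (∀ A, 0 ≤ P A) ∧
      (∑ A ∈ S.powersetCard k, P A = 1) ∧
      (∀ j ∈ S, ∑ A ∈ S.powersetCard k, (if j ∈ A then P A else 0) = π j) := by
  classical
  set A : Finset (Fin m) := S.filter (fun j => π j = 1) with hA
  have hsumA : ∑ j ∈ A, π j = ∑ j ∈ S, π j := by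
    rw [hA, Finset.sum_filter]
    refine Finset.sum_congr rfl fun j hj => ?_
    rcases h01 j hj with h | h <;> simp [h]
  have hcardA : (A.card : ℝ) = k := by
    have : ∑ j ∈ A, π j = A.card := by
      rw [hA]
      rw [Finset.sum_filter]
      rw [Finset.card_filter]
      push_cast
      refine Finset.sum_congr rfl fun j hj => ?_
      by_cases h : π j = 1 <;> simp [h]
    rw [← hsum, ← hsumA, this]
  have hAcard : A.card = k := by exact_mod_cast hcardA
  have hAmem : A ∈ S.powersetCard k := by
    rw [Finset.mem_powersetCard]
    exact ⟨Finset.filter_subset _ _, hAcard⟩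
  refine ⟨fun B => if B = A then 1 else 0, ?_, ?_, ?_⟩
  · intro B; dsimp only; split <;> norm_num
  · rw [Finset.sum_ite_eq' _ A (fun _ => (1:ℝ))]
    simp [hAmem]
  · intro j hj
    have : ∀ B ∈ S.powersetCard k,
        (if j ∈ B then (if B = A then (1:ℝ) else 0) else 0)
        = if B = A then (if j ∈ A then (1:ℝ) else 0) else 0 := by
      intro B _
      by_cases hB : B = A <;> by_cases hjB : j ∈ B <;> simp_all
    rw [Finset.sum_congr rfl this, Finset.sum_ite_eq' _ A]
    rcases h01 j hj with h | h
    · have : j ∉ A := by simp [hA, h]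
      simp [this, h]
    · have : j ∈ A := by simp [hA, hj, h]
      simp [this, hAmem, h]

private lemma aux_ind (m k : ℕ) (S : Finset (Fin m)) :
    ∀ c : ℕ, ∀ π : Fin m → ℝ,
    (S.filter (fun j => π j ≠ 0 ∧ π j ≠ 1)).card ≤ c →
    (∀ j ∈ S, 0 ≤ π j ∧ π j ≤ 1) →
    (∑ j ∈ S, π j = k) →
    ∃ P : Finset (Fin m) → ℝ,
      (∀ A, 0 ≤ P A) ∧
      (∑ A ∈ S.powersetCard k, P A = 1) ∧
      (∀ j ∈ S, ∑ A ∈ S.powersetCard k, (if j ∈ A then P A else 0) = π j) := by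
  classical
  intro c
  induction c with
  | zero =>
    intro π hc h01 hsum
    refine base_case m k S π (fun j hj => ?_) hsum
    by_contra h
    push_neg at h
    have : j ∈ S.filter (fun j => π j ≠ 0 ∧ π j ≠ 1) := by
      simp [Finset.mem_filter, hj, h]
    have := Finset.card_pos.mpr ⟨j, this⟩
    omega
  | succ c ih =>
    intro π hc h01 hsum
    set F := S.filter (fun j => π j ≠ 0 ∧ π j ≠ 1) with hF
    by_cases hF0 : F = ∅
    · refine base_case m k S π (fun j hj => ?_) hsum
      by_contra h
      push_neg at h
      have : j ∈ F := by simp [hF, Finset.mem_filter, hj, h]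
      simp [hF0] at this
    -- F nonempty; show card F ≥ 2
    have hF1 : 1 ≤ F.card := Finset.card_pos.mpr (Finset.nonempty_of_ne_empty hF0)
    have hF2 : 2 ≤ F.card := by
      by_contra h
      push_neg at h
      have hcard1 : F.card = 1 := by omega
      obtain ⟨i, hFi⟩ := Finset.card_eq_one.mp hcard1
      have hiS : i ∈ S := by
        have : i ∈ F := hFi ▸ Finset.mem_singleton_self i
        exact Finset.mem_filter.mp this |>.1
      have hifrac : π i ≠ 0 ∧ π i ≠ 1 := by
        have : i ∈ F := hFi ▸ Finset.mem_singleton_self i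
        exact Finset.mem_filter.mp this |>.2
      have hoth : ∀ j ∈ S.erase i, π j = 0 ∨ π j = 1 := by
        intro j hj
        by_contra h'
        push_neg at h'
        have : j ∈ F := by
          simp [hF, Finset.mem_filter, Finset.mem_of_mem_erase hj, h']
        rw [hFi, Finset.mem_singleton] at this
        exact (Finset.ne_of_mem_erase hj) this
      set E := (S.erase i).filter (fun j => π j = 1) with hE
      have hsumE : ∑ j ∈ S.erase i, π j = E.card := by
        rw [hE, Finset.card_filter]
        push_cast
        refine Finset.sum_congr rfl fun j hj => ?_
        rcases hoth j hj with h | h <;> simp [h]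
      have hsplit : π i + ∑ j ∈ S.erase i, π j = k := by
        rw [← hsum, Finset.add_sum_erase _ _ hiS]
      have hpii : π i = (k : ℝ) - E.card := by
        rw [hsumE] at hsplit; linarith
      have h0 : 0 ≤ π i := (h01 i hiS).1
      have h1 : π i ≤ 1 := (h01 i hiS).2
      have : π i = 0 ∨ π i = 1 := by
        have hd : (k : ℤ) - E.card = 0 ∨ (k : ℤ) - E.card = 1 := by
          have e0 : (0:ℝ) ≤ (((k : ℤ) - E.card : ℤ) : ℝ) := by push_cast; linarith
          have e1 : (((k : ℤ) - E.card : ℤ) : ℝ) ≤ 1 := by push_cast; linarith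
          have g0 : (0:ℤ) ≤ (k : ℤ) - E.card := by exact_mod_cast e0
          have g1 : (k : ℤ) - E.card ≤ 1 := by exact_mod_cast e1
          omega
        rcases hd with hd | hd
        · left
          have := congrArg (fun z : ℤ => (z : ℝ)) hd
          push_cast at this
          linarith
        · right
          have := congrArg (fun z : ℤ => (z : ℝ)) hd
          push_cast at this
          linarith
      tauto
    obtain ⟨i, hiF, j, hjF, hij⟩ := Finset.one_lt_card.mp hF2
    have hiS : i ∈ S := (Finset.mem_filter.mp hiF).1
    have hjS : j ∈ S := (Finset.mem_filter.mp hjF).1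
    have hi01 : 0 < π i ∧ π i < 1 := by
      have h := h01 i hiS
      have h' := (Finset.mem_filter.mp hiF).2
      constructor <;> [exact lt_of_le_of_ne h.1 (Ne.symm h'.1); exact lt_of_le_of_ne h.2 h'.2]
    have hj01 : 0 < π j ∧ π j < 1 := by
      have h := h01 j hjS
      have h' := (Finset.mem_filter.mp hjF).2
      constructor <;> [exact lt_of_le_of_ne h.1 (Ne.symm h'.1); exact lt_of_le_of_ne h.2 h'.2]
    set t := min (1 - π i) (π j) with ht
    set s := min (π i) (1 - π j) with hs
    have htpos : 0 < t := lt_min (by linarith [hi01.2]) hj01.1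
    have hspos : 0 < s := lt_min hi01.1 (by linarith [hj01.2])
    have ht1 : t ≤ 1 - π i := min_le_left _ _
    have ht2 : t ≤ π j := min_le_right _ _
    have hs1 : s ≤ π i := min_le_left _ _
    have hs2 : s ≤ 1 - π j := min_le_right _ _
    set πp : Fin m → ℝ := fun x => if x = i then π i + t else if x = j then π j - t else π x
      with hπp
    set πm : Fin m → ℝ := fun x => if x = i then π i - s else if x = j then π j + s else π x
      with hπm
    have hπpi : πp i = π i + t := by simp [hπp]
    have hπpj : πp j = π j - t := by simp [hπp, Ne.symm hij]
    have hπpo : ∀ x, x ≠ i → x ≠ j → πp x = π x := fun x hxi hxj => by simp [hπp, hxi, hxj]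
    have hπmi : πm i = π i - s := by simp [hπm]
    have hπmj : πm j = π j + s := by simp [hπm, Ne.symm hij]
    have hπmo : ∀ x, x ≠ i → x ≠ j → πm x = π x := fun x hxi hxj => by simp [hπm, hxi, hxj]
    -- sums preserved
    have hsum_gen : ∀ (σ : Fin m → ℝ), σ i + σ j = π i + π j →
        (∀ x, x ≠ i → x ≠ j → σ x = π x) → ∑ x ∈ S, σ x = k := by
      intro σ hσij hσ
      have : ∑ x ∈ S, (σ x - π x) = 0 := by
        have hsub : ({i, j} : Finset (Fin m)) ⊆ S := by
          intro x hx
          rcases Finset.mem_insert.mp hx with h | h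
          · exact h ▸ hiS
          · exact (Finset.mem_singleton.mp h) ▸ hjS
        rw [← Finset.sum_subset hsub (fun x _ hx => ?_)]
        · rw [Finset.sum_pair hij]; linarith
        · have hxi : x ≠ i := fun h => hx (by simp [h])
          have hxj : x ≠ j := fun h => hx (by simp [h])
          rw [hσ x hxi hxj]; ring
      rw [Finset.sum_sub_distrib] at this
      linarith [hsum]
    have hsump : ∑ x ∈ S, πp x = k :=
      hsum_gen πp (by rw [hπpi, hπpj]; ring) hπpo
    have hsumm : ∑ x ∈ S, πm x = k :=
      hsum_gen πm (by rw [hπmi, hπmj]; ring) hπmo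
    -- bounds
    have hboundp : ∀ x ∈ S, 0 ≤ πp x ∧ πp x ≤ 1 := by
      intro x hx
      by_cases hxi : x = i
      · rw [hxi, hπpi]
        constructor <;> linarith [hi01.1]
      · by_cases hxj : x = j
        · rw [hxj, hπpj]
          constructor <;> linarith [hj01.2]
        · rw [hπpo x hxi hxj]; exact h01 x hx
    have hboundm : ∀ x ∈ S, 0 ≤ πm x ∧ πm x ≤ 1 := by
      intro x hx
      by_cases hxi : x = i
      · rw [hxi, hπmi]
        constructor <;> linarith [hi01.2]
      · by_cases hxj : x = j
        · rw [hxj, hπmj]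
          constructor <;> linarith [hj01.1]
        · rw [hπmo x hxi hxj]; exact h01 x hx
    -- fractional count decreases
    have hcount : ∀ (σ : Fin m → ℝ) (w : Fin m), w ∈ F → σ w = 0 ∨ σ w = 1 →
        (∀ x, x ≠ i → x ≠ j → σ x = π x) →
        (S.filter (fun x => σ x ≠ 0 ∧ σ x ≠ 1)).card ≤ c := by
      intro σ w hwF hw hσ
      have hsub : S.filter (fun x => σ x ≠ 0 ∧ σ x ≠ 1) ⊆ F.erase w := by
        intro x hx
        rw [Finset.mem_filter] at hx
        obtain ⟨hxS, hx0, hx1⟩ := hx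
        have hxw : x ≠ w := by
          rintro rfl
          tauto
        rw [Finset.mem_erase]
        refine ⟨hxw, ?_⟩
        rw [hF, Finset.mem_filter]
        refine ⟨hxS, ?_, ?_⟩
        · by_cases hxi : x = i
          · rw [hxi]; exact hi01.1.ne'
          · by_cases hxj : x = j
            · rw [hxj]; exact hj01.1.ne'
            · rw [← hσ x hxi hxj]; exact hx0
        · by_cases hxi : x = i
          · rw [hxi]; exact hi01.2.ne
          · by_cases hxj : x = j
            · rw [hxj]; exact hj01.2.ne
            · rw [← hσ x hxi hxj]; exact hx1
      have := Finset.card_le_card hsub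
      rw [Finset.card_erase_of_mem hwF] at this
      omega
    have hcp : (S.filter (fun x => πp x ≠ 0 ∧ πp x ≠ 1)).card ≤ c := by
      by_cases hcase : 1 - π i ≤ π j
      · refine hcount πp i hiF (Or.inr ?_) hπpo
        rw [hπpi, ht, min_eq_left hcase]; ring
      · refine hcount πp j hjF (Or.inl ?_) hπpo
        rw [hπpj, ht, min_eq_right (le_of_not_ge hcase)]; ring
    have hcm : (S.filter (fun x => πm x ≠ 0 ∧ πm x ≠ 1)).card ≤ c := by
      by_cases hcase : π i ≤ 1 - π j
      · refine hcount πm i hiF (Or.inl ?_) hπmo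
        rw [hπmi, hs, min_eq_left hcase]; ring
      · refine hcount πm j hjF (Or.inr ?_) hπmo
        rw [hπmj, hs, min_eq_right (le_of_not_ge hcase)]; ring
    obtain ⟨Pp, hPp0, hPp1, hPpm⟩ := ih πp hcp hboundp hsump
    obtain ⟨Pm, hPm0, hPm1, hPmm⟩ := ih πm hcm hboundm hsumm
    set lam := s / (s + t) with hlam
    have hst : 0 < s + t := by linarith
    have hlam0 : 0 ≤ lam := div_nonneg hspos.le hst.le
    have hlam1 : lam ≤ 1 := by
      rw [hlam, div_le_one hst]; linarith
    have hconv : ∀ x ∈ S, lam * πp x + (1 - lam) * πm x = π x := by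
      intro x hx
      by_cases hxi : x = i
      · rw [hxi, hπpi, hπmi, hlam]
        field_simp
        ring
      · by_cases hxj : x = j
        · rw [hxj, hπpj, hπmj, hlam]
          field_simp
          ring
        · rw [hπpo x hxi hxj, hπmo x hxi hxj]; ring
    refine ⟨fun A => lam * Pp A + (1 - lam) * Pm A, ?_, ?_, ?_⟩
    · intro A
      dsimp only
      have h1 := mul_nonneg hlam0 (hPp0 A)
      have h2 := mul_nonneg (by linarith : (0:ℝ) ≤ 1 - lam) (hPm0 A)
      linarith
    · rw [Finset.sum_add_distrib, ← Finset.mul_sum, ← Finset.mul_sum, hPp1, hPm1]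
      ring
    · intro x hx
      have h1 : ∀ A ∈ S.powersetCard k,
          (if x ∈ A then lam * Pp A + (1 - lam) * Pm A else 0)
          = lam * (if x ∈ A then Pp A else 0) + (1 - lam) * (if x ∈ A then Pm A else 0) := by
        intro A _
        by_cases hA : x ∈ A <;> simp [hA]
      rw [Finset.sum_congr rfl h1, Finset.sum_add_distrib, ← Finset.mul_sum, ← Finset.mul_sum,
        hPpm x hx, hPmm x hx]
      exact hconv x hx

/-- Any vector `(πⱼ)_{j∈S}` with entries in `[0,1]` summing to `k` is realizable as the
one-dimensional marginals of a probability distribution on the `k`-element subsets of `S`. -/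
theorem exists_subset_distribution_with_marginals
    (m : ℕ) (S : Finset (Fin m)) (n k : ℕ) (hS : S.card = n) (hk1 : 1 ≤ k) (hk : k ≤ n)
    (π : Fin m → ℝ) (hπ01 : ∀ j ∈ S, 0 ≤ π j ∧ π j ≤ 1)
    (hπsum : ∑ j ∈ S, π j = k) :
    ∃ P : Finset (Fin m) → ℝ,
      (∀ A, 0 ≤ P A) ∧
      (∑ A ∈ S.powersetCard k, P A = 1) ∧
      (∀ j ∈ S, ∑ A ∈ S.powersetCard k, (if j ∈ A then P A else 0) = π j) := by
  classical
  exact aux_ind m k S (S.filter (fun j => π j ≠ 0 ∧ π j ≠ 1)).card π le_rfl hπ01 hπsum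
end

section
/- For a positive integer m and positive reals c, μ: m·μ·∫₀ᶜ x·e^{−μx}·(1 − e^{−μx})^{m−1} dx = c·(1 − e^{−μc})^m − c + Σ_{i=1}^{m} (1 − e^{−μc})^i / (i·μ). -/
open Real

lemma hasDerivAt_aux (m : ℕ) (hm : 0 < m) (μr : ℝ) (hμr : 0 < μr) (x : ℝ) :
    HasDerivAt (fun x : ℝ => x * (1 - Real.exp (-μr * x)) ^ m - x +
        ∑ i ∈ Finset.Icc 1 m, (1 - Real.exp (-μr * x)) ^ i / (i * μr))
      ((m : ℝ) * μr * (x * Real.exp (-μr * x) * (1 - Real.exp (-μr * x)) ^ (m - 1))) x := by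
  set u : ℝ := 1 - Real.exp (-μr * x) with hu_def
  have hexp : HasDerivAt (fun x : ℝ => Real.exp (-μr * x)) (Real.exp (-μr * x) * (-μr)) x := by
    have h1 : HasDerivAt (fun x : ℝ => -μr * x) (-μr) x := by
      simpa using (hasDerivAt_id x).const_mul (-μr)
    exact h1.exp
  have hu : HasDerivAt (fun x : ℝ => 1 - Real.exp (-μr * x)) (μr * Real.exp (-μr * x)) x := by
    have := hexp.const_sub 1
    exact this.congr_deriv (by ring)
  -- derivative of x * u^m
  have h1 : HasDerivAt (fun x : ℝ => x * (1 - Real.exp (-μr * x)) ^ m)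
      (u ^ m + x * ((m : ℝ) * u ^ (m - 1) * (μr * Real.exp (-μr * x)))) x := by
    have := (hasDerivAt_id x).mul (hu.pow m)
    exact this.congr_deriv (by simp only [id_eq, Pi.pow_apply]; ring)
  -- derivative of the sum
  have h2 : HasDerivAt (fun x : ℝ => ∑ i ∈ Finset.Icc 1 m, (1 - Real.exp (-μr * x)) ^ i / (i * μr))
      (∑ i ∈ Finset.Icc 1 m, Real.exp (-μr * x) * u ^ (i - 1)) x := by
    apply HasDerivAt.fun_sum
    intro i hi
    have hi1 : 1 ≤ i := (Finset.mem_Icc.mp hi).1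
    have hine : (i : ℝ) ≠ 0 := Nat.cast_ne_zero.mpr (by omega)
    have := (hu.pow i).div_const ((i : ℝ) * μr)
    exact this.congr_deriv (by rw [hu_def]; field_simp)
  -- sum of derivatives equals 1 - u^m
  have hsum : (∑ i ∈ Finset.Icc 1 m, Real.exp (-μr * x) * u ^ (i - 1)) = 1 - u ^ m := by
    have he : Real.exp (-μr * x) = 1 - u := by rw [hu_def]; ring
    calc (∑ i ∈ Finset.Icc 1 m, Real.exp (-μr * x) * u ^ (i - 1))
        = ∑ j ∈ Finset.range m, (1 - u) * u ^ j := by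
          rw [he, ← Finset.Ico_add_one_right_eq_Icc, Finset.sum_Ico_eq_sum_range]
          simp
      _ = 1 - u ^ m := by
          rw [← Finset.mul_sum]
          linear_combination -(geom_sum_mul u m)
  have := (h1.sub (hasDerivAt_id x)).add h2
  exact this.congr_deriv (by rw [hsum]; ring)

/-- Integral identity: for a positive integer `m` and positive reals `c, μr`,
`m μr ∫₀ᶜ x e^{−μr x} (1 − e^{−μr x})^{m−1} dx
  = c (1 − e^{−μr c})^m − c + Σ_{i=1}^m (1 − e^{−μr c})^i / (i μr)`. -/
theorem integral_truncated_max_exponential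
    (m : ℕ) (hm : 0 < m) (c μr : ℝ) (hc : 0 < c) (hμr : 0 < μr) :
    (m : ℝ) * μr * ∫ x in (0 : ℝ)..c,
        x * Real.exp (-μr * x) * (1 - Real.exp (-μr * x)) ^ (m - 1) =
      c * (1 - Real.exp (-μr * c)) ^ m - c +
        ∑ i ∈ Finset.Icc 1 m, (1 - Real.exp (-μr * c)) ^ i / (i * μr) := by
  set G : ℝ → ℝ := fun x => x * (1 - Real.exp (-μr * x)) ^ m - x +
      ∑ i ∈ Finset.Icc 1 m, (1 - Real.exp (-μr * x)) ^ i / (i * μr) with hG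
  have key : ∫ x in (0 : ℝ)..c,
      (m : ℝ) * μr * (x * Real.exp (-μr * x) * (1 - Real.exp (-μr * x)) ^ (m - 1)) =
      G c - G 0 := by
    apply intervalIntegral.integral_eq_sub_of_hasDerivAt
    · intro x _
      exact hasDerivAt_aux m hm μr hμr x
    · apply Continuous.intervalIntegrable
      continuity
  have hG0 : G 0 = 0 := by
    simp only [hG]
    simp only [mul_zero, Real.exp_zero, sub_self]
    rw [Finset.sum_eq_zero, zero_pow (by omega : m ≠ 0)]
    · ring
    · intro i hi
      have := (Finset.mem_Icc.mp hi).1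
      rw [zero_pow (by omega : i ≠ 0), zero_div]
  rw [← intervalIntegral.integral_const_mul] at *
  rw [key, hG0, hG]
  ring
end
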